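/- arXiv:1002.2283 — 4 statements merged into one kernel-verified Lean document; each statement's English description precedes it below -/
import Mathlib

section
/- Consider the Pairwise Equalizing (PE) dynamics: 𝒳 ⊆ ℝ a nonempty open interval, V a finite set with at least 2 elements, each f_i : 𝒳 → ℝ (i ∈ V) strictly convex, continuously differentiable, with minimizer x_i* ∈ 𝒳; a gossip sequence assigning to each k ≥ 1 a pair u(k) = {u₁(k), u₂(k)} of distinct nodes; and sequences x̂_i : ℕ → 𝒳 with x̂_i(0) = x_i* for all i ∈ V, x̂_i(k) = x̂_i(k−1) for all i ∉ u(k), x̂_{u₁(k)}(k) = x̂_{u₂(k)}(k), and f'_{u₁(k)}(x̂_{u₁(k)}(k)) + f'_{u₂(k)}(x̂_{u₂(k)}(k)) = f'_{u₁(k)}(x̂_{u₁(k)}(k−1)) + f'_{u₂(k)}(x̂_{u₂(k)}(k−1)) for all k ≥ 1. Then for every k ≥ 1, [min_{i∈V} x̂_i(k), max_{i∈V} x̂_i(k)] ⊆ [min_{i∈V} x̂_i(k−1), max_{i∈V} x̂_i(k−1)]; in particular all iterates remain in the compact interval [min_{i∈V} x_i*, max_{i∈V} x_i*]. -/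
/-- Under the Pairwise Equalizing dynamics, the interval spanned
by the node estimates can only shrink or stay the same, and all iterates
remain in `[min_i x_i*, max_i x_i*]`. -/
theorem stmt_7 (X : Set ℝ) (hXopen : IsOpen X) (hXne : X.Nonempty)
    (hXconn : X.OrdConnected)
    (ι : Type*) [Fintype ι] [Nonempty ι] (hcard : 2 ≤ Fintype.card ι)
    (f f' : ι → ℝ → ℝ)
    (hconv : ∀ i, StrictConvexOn ℝ X (f i))
    (hderiv : ∀ i, ∀ x ∈ X, HasDerivAt (f i) (f' i x) x)
    (hcont : ∀ i, ContinuousOn (f' i) X)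
    (xm : ι → ℝ) (hxm : ∀ i, xm i ∈ X)
    (hmin : ∀ i, ∀ x ∈ X, f i (xm i) ≤ f i x)
    (u1 u2 : ℕ → ι) (hu : ∀ k, 1 ≤ k → u1 k ≠ u2 k)
    (xh : ι → ℕ → ℝ) (hxh : ∀ i k, xh i k ∈ X)
    (hinit : ∀ i, xh i 0 = xm i)
    (hidle : ∀ k, 1 ≤ k → ∀ i, i ≠ u1 k → i ≠ u2 k → xh i k = xh i (k - 1))
    (heq : ∀ k, 1 ≤ k → xh (u1 k) k = xh (u2 k) k)
    (hcons : ∀ k, 1 ≤ k →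
      f' (u1 k) (xh (u1 k) k) + f' (u2 k) (xh (u2 k) k) =
      f' (u1 k) (xh (u1 k) (k - 1)) + f' (u2 k) (xh (u2 k) (k - 1))) :
    (∀ k, 1 ≤ k →
      Set.Icc (Finset.univ.inf' Finset.univ_nonempty (fun i => xh i k))
              (Finset.univ.sup' Finset.univ_nonempty (fun i => xh i k)) ⊆
      Set.Icc (Finset.univ.inf' Finset.univ_nonempty (fun i => xh i (k - 1)))
              (Finset.univ.sup' Finset.univ_nonempty (fun i => xh i (k - 1)))) ∧
    (∀ i k, xh i k ∈
      Set.Icc (Finset.univ.inf' Finset.univ_nonempty xm)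
              (Finset.univ.sup' Finset.univ_nonempty xm)) := by
  -- the derivatives f' i are strictly monotone on X
  have hmono : ∀ i, StrictMonoOn (f' i) X := by
    intro i
    have h1 : StrictMonoOn (deriv (f i)) X :=
      (hconv i).strictMonoOn_deriv (fun x hx => (hderiv i x hx).differentiableAt)
    intro x hx y hy hxy
    have ex : deriv (f i) x = f' i x := (hderiv i x hx).deriv
    have ey : deriv (f i) y = f' i y := (hderiv i y hy).deriv
    rw [← ex, ← ey]; exact h1 hx hy hxy
  -- the new common value lies between the two previous values
  have between : ∀ k, 1 ≤ k →
      min (xh (u1 k) (k-1)) (xh (u2 k) (k-1)) ≤ xh (u1 k) k ∧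
      xh (u1 k) k ≤ max (xh (u1 k) (k-1)) (xh (u2 k) (k-1)) := by
    intro k hk
    set a := xh (u1 k) (k - 1) with ha
    set b := xh (u2 k) (k - 1) with hb
    set c := xh (u1 k) k with hc
    have hcb : xh (u2 k) k = c := (heq k hk).symm
    have hcons' : f' (u1 k) c + f' (u2 k) c = f' (u1 k) a + f' (u2 k) b := by
      have := hcons k hk; rwa [hcb] at this
    constructor
    · by_contra h
      push_neg at h
      have h1 : c < a := lt_of_lt_of_le h (min_le_left _ _)
      have h2 : c < b := lt_of_lt_of_le h (min_le_right _ _)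
      have := add_lt_add (hmono (u1 k) (hxh (u1 k) k) (hxh (u1 k) (k-1)) h1)
        (hmono (u2 k) (hxh (u1 k) k) (hxh (u2 k) (k-1)) h2)
      rw [hcons'] at this; exact lt_irrefl _ this
    · by_contra h
      push_neg at h
      have h1 : a < c := lt_of_le_of_lt (le_max_left _ _) h
      have h2 : b < c := lt_of_le_of_lt (le_max_right _ _) h
      have := add_lt_add (hmono (u1 k) (hxh (u1 k) (k-1)) (hxh (u1 k) k) h1)
        (hmono (u2 k) (hxh (u2 k) (k-1)) (hxh (u1 k) k) h2)
      rw [hcons'] at this; exact lt_irrefl _ this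
  have key : ∀ k, 1 ≤ k → ∀ i,
      Finset.univ.inf' Finset.univ_nonempty (fun j => xh j (k - 1)) ≤ xh i k ∧
      xh i k ≤ Finset.univ.sup' Finset.univ_nonempty (fun j => xh j (k - 1)) := by
    intro k hk i
    have hbound : ∀ (v : ι), xh v k = xh (u1 k) k →
        Finset.univ.inf' Finset.univ_nonempty (fun j => xh j (k - 1)) ≤ xh v k ∧
        xh v k ≤ Finset.univ.sup' Finset.univ_nonempty (fun j => xh j (k - 1)) := by
      intro v hv
      rw [hv]
      constructor
      · refine le_trans (le_min ?_ ?_) (between k hk).1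
        · exact Finset.inf'_le (fun j => xh j (k-1)) (Finset.mem_univ (u1 k))
        · exact Finset.inf'_le (fun j => xh j (k-1)) (Finset.mem_univ (u2 k))
      · refine le_trans (between k hk).2 (max_le ?_ ?_)
        · exact Finset.le_sup' (fun j => xh j (k-1)) (Finset.mem_univ (u1 k))
        · exact Finset.le_sup' (fun j => xh j (k-1)) (Finset.mem_univ (u2 k))
    by_cases h1 : i = u1 k
    · exact hbound i (by rw [h1])
    · by_cases h2 : i = u2 k
      · exact hbound i (by rw [h2, heq k hk])
      · rw [hidle k hk i h1 h2]
        exact ⟨Finset.inf'_le (fun j => xh j (k-1)) (Finset.mem_univ i),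
          Finset.le_sup' (fun j => xh j (k-1)) (Finset.mem_univ i)⟩
  constructor
  · intro k hk
    apply Set.Icc_subset_Icc
    · exact Finset.le_inf' _ _ (fun i _ => (key k hk i).1)
    · exact Finset.sup'_le _ _ (fun i _ => (key k hk i).2)
  · intro i k
    induction k generalizing i with
    | zero =>
      rw [hinit i]
      exact ⟨Finset.inf'_le xm (Finset.mem_univ i), Finset.le_sup' xm (Finset.mem_univ i)⟩
    | succ n ih =>
      have hk : 1 ≤ n + 1 := Nat.succ_le_succ (Nat.zero_le n)
      have h := key (n + 1) hk i
      simp only [Nat.add_sub_cancel] at h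
      constructor
      · exact le_trans (Finset.le_inf' _ _ (fun j _ => (ih j).1)) h.1
      · exact le_trans h.2 (Finset.sup'_le _ _ (fun j _ => (ih j).2))
end

section
/- Consider the Pairwise Equalizing (PE) dynamics: 𝒳 ⊆ ℝ a nonempty open interval, V a finite set with at least 2 elements, each f_i : 𝒳 → ℝ (i ∈ V) strictly convex, continuously differentiable, with minimizer x_i* ∈ 𝒳; x* ∈ 𝒳 the unique zero of ∑_{i∈V} f_i'; the Lyapunov function V(x) = ∑_{i∈V} [f_i(x*) − f_i(x_i) − f_i'(x_i)(x* − x_i)]; and sequences x̂_i : ℕ → 𝒳 with x̂_i(0) = x_i*, and for each k ≥ 1 a gossip pair u(k) = {u₁(k), u₂(k)} of distinct nodes such that x̂_i(k) = x̂_i(k−1) for i ∉ u(k), x̂_{u₁(k)}(k) = x̂_{u₂(k)}(k), and f'_{u₁(k)}(x̂_{u₁(k)}(k)) + f'_{u₂(k)}(x̂_{u₂(k)}(k)) = f'_{u₁(k)}(x̂_{u₁(k)}(k−1)) + f'_{u₂(k)}(x̂_{u₂(k)}(k−1)). Then for every k ≥ 1, V(x̂(k)) − V(x̂(k−1)) =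 −∑_{i∈u(k)} [f_i(x̂_i(k)) − f_i(x̂_i(k−1)) − f_i'(x̂_i(k−1))(x̂_i(k) − x̂_i(k−1))], and consequently the sequence (V(x̂(k)))_{k≥0} is non-increasing. -/
/-- Bregman nonnegativity: for a convex function with derivative `d` at `b`,
the tangent line at `b` lies below the graph. -/
lemma bregman_nonneg {S : Set ℝ} {g : ℝ → ℝ} {a b d : ℝ}
    (hfc : ConvexOn ℝ S g) (ha : a ∈ S) (hb : b ∈ S)
    (hd : HasDerivAt g d b) : g b + d * (a - b) ≤ g a := by
  rcases lt_trichotomy a b with h | h | h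
  · have := hfc.slope_le_of_hasDerivAt ha hb h hd
    rw [slope_def_field] at this
    have hba : 0 < b - a := by linarith
    rw [div_le_iff₀ hba] at this
    nlinarith
  · simp [h]
  · have := hfc.le_slope_of_hasDerivAt hb ha h hd
    rw [slope_def_field] at this
    have hab : 0 < a - b := by linarith
    rw [le_div_iff₀ hab] at this
    nlinarith


/-- Along the Pairwise Equalizing dynamics, the drop of the
Lyapunov function `V x = ∑ i, [f i x* - f i (x i) - f' i (x i) * (x* - x i)]`
at each iteration equals minus the sum, over the two gossiping nodes, of their
Bregman differences; consequently `(V(x̂(k)))_k` is non-increasing. -/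
theorem stmt_9 (X : Set ℝ) (hXopen : IsOpen X) (hXne : X.Nonempty)
    (hXconn : X.OrdConnected)
    (ι : Type*) [Fintype ι] [Nonempty ι] (hcard : 2 ≤ Fintype.card ι)
    (f f' : ι → ℝ → ℝ)
    (hconv : ∀ i, StrictConvexOn ℝ X (f i))
    (hderiv : ∀ i, ∀ x ∈ X, HasDerivAt (f i) (f' i x) x)
    (hcont : ∀ i, ContinuousOn (f' i) X)
    (xm : ι → ℝ) (hxm : ∀ i, xm i ∈ X)
    (hmin : ∀ i, ∀ x ∈ X, f i (xm i) ≤ f i x)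
    (xs : ℝ) (hxs : xs ∈ X) (hxs0 : ∑ i, f' i xs = 0)
    (u1 u2 : ℕ → ι) (hu : ∀ k, 1 ≤ k → u1 k ≠ u2 k)
    (xh : ι → ℕ → ℝ) (hxh : ∀ i k, xh i k ∈ X)
    (hinit : ∀ i, xh i 0 = xm i)
    (hidle : ∀ k, 1 ≤ k → ∀ i, i ≠ u1 k → i ≠ u2 k → xh i k = xh i (k - 1))
    (heq : ∀ k, 1 ≤ k → xh (u1 k) k = xh (u2 k) k)
    (hcons : ∀ k, 1 ≤ k →
      f' (u1 k) (xh (u1 k) k) + f' (u2 k) (xh (u2 k) k) =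
      f' (u1 k) (xh (u1 k) (k - 1)) + f' (u2 k) (xh (u2 k) (k - 1))) :
    (∀ k, 1 ≤ k →
      (∑ i, (f i xs - f i (xh i k) - f' i (xh i k) * (xs - xh i k))) -
      (∑ i, (f i xs - f i (xh i (k - 1)) - f' i (xh i (k - 1)) * (xs - xh i (k - 1)))) =
      -((f (u1 k) (xh (u1 k) k) - f (u1 k) (xh (u1 k) (k - 1)) -
          f' (u1 k) (xh (u1 k) (k - 1)) * (xh (u1 k) k - xh (u1 k) (k - 1))) +
        (f (u2 k) (xh (u2 k) k) - f (u2 k) (xh (u2 k) (k - 1)) -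
          f' (u2 k) (xh (u2 k) (k - 1)) * (xh (u2 k) k - xh (u2 k) (k - 1))))) ∧
    Antitone (fun k : ℕ =>
      ∑ i, (f i xs - f i (xh i k) - f' i (xh i k) * (xs - xh i k))) := by
  have key : ∀ k, 1 ≤ k →
      (∑ i, (f i xs - f i (xh i k) - f' i (xh i k) * (xs - xh i k))) -
      (∑ i, (f i xs - f i (xh i (k - 1)) - f' i (xh i (k - 1)) * (xs - xh i (k - 1)))) =
      -((f (u1 k) (xh (u1 k) k) - f (u1 k) (xh (u1 k) (k - 1)) -
          f' (u1 k) (xh (u1 k) (k - 1)) * (xh (u1 k) k - xh (u1 k) (k - 1))) +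
        (f (u2 k) (xh (u2 k) k) - f (u2 k) (xh (u2 k) (k - 1)) -
          f' (u2 k) (xh (u2 k) (k - 1)) * (xh (u2 k) k - xh (u2 k) (k - 1)))) := by
    intro k hk
    classical
    rw [← Finset.sum_sub_distrib]
    have hz : ∀ i ∈ Finset.univ, i ∉ ({u1 k, u2 k} : Finset ι) →
        ((f i xs - f i (xh i k) - f' i (xh i k) * (xs - xh i k)) -
         (f i xs - f i (xh i (k - 1)) - f' i (xh i (k - 1)) * (xs - xh i (k - 1)))) = 0 := by
      intro i _ hi
      simp only [Finset.mem_insert, Finset.mem_singleton, not_or] at hi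
      rw [hidle k hk i hi.1 hi.2]
      ring
    rw [← Finset.sum_subset (Finset.subset_univ _) hz,
      Finset.sum_pair (hu k hk)]
    have h1 := heq k hk
    have h2 := hcons k hk
    rw [h1] at h2 ⊢
    linear_combination (xh (u2 k) k - xs) * h2
  refine ⟨key, antitone_nat_of_succ_le ?_⟩
  intro k
  have hk1 : 1 ≤ k + 1 := Nat.le_add_left 1 k
  have hkey := key (k + 1) hk1
  simp only [Nat.add_sub_cancel] at hkey
  have hb1 : f (u1 (k+1)) (xh (u1 (k+1)) k) +
      f' (u1 (k+1)) (xh (u1 (k+1)) k) * (xh (u1 (k+1)) (k+1) - xh (u1 (k+1)) k) ≤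
      f (u1 (k+1)) (xh (u1 (k+1)) (k+1)) :=
    bregman_nonneg (hconv _).convexOn (hxh _ _) (hxh _ _) (hderiv _ _ (hxh _ _))
  have hb2 : f (u2 (k+1)) (xh (u2 (k+1)) k) +
      f' (u2 (k+1)) (xh (u2 (k+1)) k) * (xh (u2 (k+1)) (k+1) - xh (u2 (k+1)) k) ≤
      f (u2 (k+1)) (xh (u2 (k+1)) (k+1)) :=
    bregman_nonneg (hconv _).convexOn (hxh _ _) (hxh _ _) (hderiv _ _ (hxh _ _))
  linarith
end

section
/- Consider the Pairwise Equalizing (PE) dynamics: 𝒳 ⊆ ℝ a nonempty open interval, V a finite set with at least 2 elements, each f_i : 𝒳 → ℝ (i ∈ V) strictly convex, continuously differentiable, with minimizer x_i* ∈ 𝒳; x* ∈ 𝒳 the unique zero of ∑_{i∈V} f_i'; sequences x̂_i : ℕ → 𝒳 with x̂_i(0) = x_i*, and for each k ≥ 1 a gossip pair u(k) = {u₁(k), u₂(k)} of distinct nodes such that x̂_i(k) = x̂_i(k−1) for i ∉ u(k), x̂_{u₁(k)}(k) = x̂_{u₂(k)}(k), and f'_{u₁(k)}(x̂_{u₁(k)}(k))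 + f'_{u₂(k)}(x̂_{u₂(k)}(k)) = f'_{u₁(k)}(x̂_{u₁(k)}(k−1)) + f'_{u₂(k)}(x̂_{u₂(k)}(k−1)). Suppose the graph on vertex set V whose edges are the pairs {i,j} with u(k) = {i,j} for infinitely many k is connected. Then lim_{k→∞} x̂_i(k) = x* for every i ∈ V. -/
open Filter Topology

lemma sum_pair_ext {ι : Type*} [Fintype ι] {a b : ι} (hab : a ≠ b) (v w : ι → ℝ)
    (hoff : ∀ i, i ≠ a → i ≠ b → v i = w i) (hpair : v a + v b = w a + w b) :
    ∑ i, v i = ∑ i, w i := by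
  classical
  have hsub : ({a, b} : Finset ι) ⊆ Finset.univ := Finset.subset_univ _
  rw [← Finset.sum_sdiff hsub (f := v), ← Finset.sum_sdiff hsub (f := w),
    Finset.sum_pair hab, Finset.sum_pair hab]
  congr 1
  refine Finset.sum_congr rfl fun i hi => ?_
  simp only [Finset.mem_sdiff, Finset.mem_insert, Finset.mem_singleton] at hi
  exact hoff i (fun h => hi.2 (Or.inl h)) (fun h => hi.2 (Or.inr h))

lemma breg_pos {X : Set ℝ} {f g : ℝ → ℝ}
    (hconv : StrictConvexOn ℝ X f)
    (hderiv : ∀ x ∈ X, HasDerivAt f (g x) x)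
    {t s : ℝ} (ht : t ∈ X) (hs : s ∈ X) (hne : t ≠ s) :
    0 < f s - f t - g t * (s - t) := by
  rcases lt_or_gt_of_ne hne with h | h
  · have h1 := hconv.lt_slope_of_hasDerivAt ht hs h (hderiv t ht)
    rw [slope_def_field] at h1
    have h2 : (0:ℝ) < s - t := by linarith
    have := (lt_div_iff₀ h2).mp h1
    linarith
  · have h1 := hconv.slope_lt_of_hasDerivAt hs ht h (hderiv t ht)
    rw [slope_def_field] at h1
    have h2 : (0:ℝ) < t - s := by linarith
    have := (div_lt_iff₀ h2).mp h1
    nlinarith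

lemma breg_nonneg {X : Set ℝ} {f g : ℝ → ℝ}
    (hconv : StrictConvexOn ℝ X f)
    (hderiv : ∀ x ∈ X, HasDerivAt f (g x) x)
    {t s : ℝ} (ht : t ∈ X) (hs : s ∈ X) :
    0 ≤ f s - f t - g t * (s - t) := by
  rcases eq_or_ne t s with rfl | hne
  · simp
  · exact (breg_pos hconv hderiv ht hs hne).le

lemma deriv_strictMonoOn {X : Set ℝ} {f g : ℝ → ℝ}
    (hconv : StrictConvexOn ℝ X f)
    (hderiv : ∀ x ∈ X, HasDerivAt f (g x) x) :
    StrictMonoOn g X := fun x hx y hy hxy =>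
  (hconv.lt_slope_of_hasDerivAt hx hy hxy (hderiv x hx)).trans
    (hconv.slope_lt_of_hasDerivAt hx hy hxy (hderiv y hy))

/-- Asymptotic convergence of Pairwise Equalizing: if the graph
of persistently gossiping pairs is connected, every node estimate converges to
the optimizer `x*`. -/
theorem stmt_10 (X : Set ℝ) (hXopen : IsOpen X) (hXne : X.Nonempty)
    (hXconn : X.OrdConnected)
    (ι : Type*) [Fintype ι] [Nonempty ι] (hcard : 2 ≤ Fintype.card ι)
    (f f' : ι → ℝ → ℝ)
    (hconv : ∀ i, StrictConvexOn ℝ X (f i))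
    (hderiv : ∀ i, ∀ x ∈ X, HasDerivAt (f i) (f' i x) x)
    (hcont : ∀ i, ContinuousOn (f' i) X)
    (xm : ι → ℝ) (hxm : ∀ i, xm i ∈ X)
    (hmin : ∀ i, ∀ x ∈ X, f i (xm i) ≤ f i x)
    (xs : ℝ) (hxs : xs ∈ X) (hxs0 : ∑ i, f' i xs = 0)
    (u1 u2 : ℕ → ι) (hu : ∀ k, 1 ≤ k → u1 k ≠ u2 k)
    (xh : ι → ℕ → ℝ) (hxh : ∀ i k, xh i k ∈ X)
    (hinit : ∀ i, xh i 0 = xm i)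
    (hidle : ∀ k, 1 ≤ k → ∀ i, i ≠ u1 k → i ≠ u2 k → xh i k = xh i (k - 1))
    (heq : ∀ k, 1 ≤ k → xh (u1 k) k = xh (u2 k) k)
    (hcons : ∀ k, 1 ≤ k →
      f' (u1 k) (xh (u1 k) k) + f' (u2 k) (xh (u2 k) k) =
      f' (u1 k) (xh (u1 k) (k - 1)) + f' (u2 k) (xh (u2 k) (k - 1)))
    (G : SimpleGraph ι)
    (hG : ∀ i j, G.Adj i j ↔ i ≠ j ∧
      {k : ℕ | 1 ≤ k ∧ ({u1 k, u2 k} : Set ι) = {i, j}}.Infinite)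
    (hconn : G.Connected) :
    ∀ i, Tendsto (xh i) atTop (nhds xs) := by
  classical
  -- basic analytic facts
  have hcf : ∀ i, ContinuousOn (f i) X :=
    fun i x hx => ((hderiv i x hx).continuousAt).continuousWithinAt
  have hmono : ∀ i, StrictMonoOn (f' i) X :=
    fun i => deriv_strictMonoOn (hconv i) (hderiv i)
  have hone : ∀ mm : ℕ, (1:ℕ) ≤ mm + 1 := fun mm => Nat.succ_le_succ (Nat.zero_le mm)
  -- betweenness of new common value
  have hbtw : ∀ mm : ℕ,
      min (xh (u1 (mm+1)) mm) (xh (u2 (mm+1)) mm) ≤ xh (u1 (mm+1)) (mm+1) ∧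
      xh (u1 (mm+1)) (mm+1) ≤ max (xh (u1 (mm+1)) mm) (xh (u2 (mm+1)) mm) := by
    intro mm
    have he := heq _ (hone mm)
    have hc := hcons _ (hone mm)
    simp only [Nat.add_sub_cancel] at hc
    constructor
    · by_contra h
      push_neg at h
      have hpa : f' (u1 (mm+1)) (xh (u1 (mm+1)) (mm+1)) < f' (u1 (mm+1)) (xh (u1 (mm+1)) mm) :=
        hmono _ (hxh _ _) (hxh _ _) (lt_of_lt_of_le h (min_le_left _ _))
      have hpb : f' (u2 (mm+1)) (xh (u2 (mm+1)) (mm+1)) < f' (u2 (mm+1)) (xh (u2 (mm+1)) mm) :=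
        hmono _ (hxh _ _) (hxh _ _) (by rw [← he]; exact lt_of_lt_of_le h (min_le_right _ _))
      linarith
    · by_contra h
      push_neg at h
      have hpa : f' (u1 (mm+1)) (xh (u1 (mm+1)) mm) < f' (u1 (mm+1)) (xh (u1 (mm+1)) (mm+1)) :=
        hmono _ (hxh _ _) (hxh _ _) (lt_of_le_of_lt (le_max_left _ _) h)
      have hpb : f' (u2 (mm+1)) (xh (u2 (mm+1)) mm) < f' (u2 (mm+1)) (xh (u2 (mm+1)) (mm+1)) :=
        hmono _ (hxh _ _) (hxh _ _) (by rw [← he]; exact lt_of_le_of_lt (le_max_right _ _) h)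
      linarith
  -- min and max processes
  have hne' : (Finset.univ : Finset ι).Nonempty := Finset.univ_nonempty
  set mlo : ℕ → ℝ := fun k => Finset.univ.inf' hne' (fun i => xh i k) with hmlo_def
  set Mhi : ℕ → ℝ := fun k => Finset.univ.sup' hne' (fun i => xh i k) with hMhi_def
  have hmlo_le : ∀ k i, mlo k ≤ xh i k := fun k i => Finset.inf'_le (fun i => xh i k) (Finset.mem_univ i)
  have hle_Mhi : ∀ k i, xh i k ≤ Mhi k := fun k i => Finset.le_sup' (fun i => xh i k) (Finset.mem_univ i)
  have hMstep : ∀ mm, Mhi (mm+1) ≤ Mhi mm := by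
    intro mm
    apply Finset.sup'_le
    intro i _
    have hmax : max (xh (u1 (mm+1)) mm) (xh (u2 (mm+1)) mm) ≤ Mhi mm :=
      max_le (hle_Mhi mm _) (hle_Mhi mm _)
    by_cases hia : i = u1 (mm+1)
    · subst hia; exact le_trans (hbtw mm).2 hmax
    by_cases hib : i = u2 (mm+1)
    · subst hib
      rw [← heq _ (hone mm)]
      exact le_trans (hbtw mm).2 hmax
    · rw [hidle _ (hone mm) i hia hib]; exact hle_Mhi mm i
  have hmstep : ∀ mm, mlo mm ≤ mlo (mm+1) := by
    intro mm
    apply Finset.le_inf'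
    intro i _
    have hmin' : mlo mm ≤ min (xh (u1 (mm+1)) mm) (xh (u2 (mm+1)) mm) :=
      le_min (hmlo_le mm _) (hmlo_le mm _)
    by_cases hia : i = u1 (mm+1)
    · subst hia; exact le_trans hmin' (hbtw mm).1
    by_cases hib : i = u2 (mm+1)
    · subst hib
      rw [← heq _ (hone mm)]
      exact le_trans hmin' (hbtw mm).1
    · rw [hidle _ (hone mm) i hia hib]; exact hmlo_le mm i
  have hManti : Antitone Mhi := antitone_nat_of_succ_le hMstep
  have hmmono : Monotone mlo := monotone_nat_of_le_succ hmstep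
  have hmM : ∀ k, mlo k ≤ Mhi k :=
    fun k => le_trans (hmlo_le k (Classical.arbitrary ι)) (hle_Mhi k _)
  have hJX : Set.Icc (mlo 0) (Mhi 0) ⊆ X := by
    obtain ⟨i0, -, h0⟩ := Finset.exists_mem_eq_inf' hne' (fun i => xh i 0)
    obtain ⟨i1, -, h1⟩ := Finset.exists_mem_eq_sup' hne' (fun i => xh i 0)
    have e0 : mlo 0 = xh i0 0 := h0
    have e1 : Mhi 0 = xh i1 0 := h1
    rw [e0, e1]
    exact hXconn.out (hxh i0 0) (hxh i1 0)
  have hxhJ : ∀ i k, xh i k ∈ Set.Icc (mlo 0) (Mhi 0) := fun i k =>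
    ⟨le_trans (hmmono (Nat.zero_le k)) (hmlo_le k i),
     le_trans (hle_Mhi k i) (hManti (Nat.zero_le k))⟩
  -- Lyapunov function
  set Dg : ι → ℝ → ℝ → ℝ := fun i s t => f i s - f i t - f' i t * (s - t) with hDg_def
  have hDpos : ∀ i {t s}, t ∈ X → s ∈ X → t ≠ s → 0 < Dg i s t :=
    fun i _ _ ht hs hne => breg_pos (hconv i) (hderiv i) ht hs hne
  have hDnn : ∀ i {t s}, t ∈ X → s ∈ X → 0 ≤ Dg i s t :=
    fun i _ _ ht hs => breg_nonneg (hconv i) (hderiv i) ht hs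
  set V : ℕ → ℝ := fun k => ∑ i, Dg i xs (xh i k) with hV_def
  have hVnn : ∀ k, 0 ≤ V k :=
    fun k => Finset.sum_nonneg fun i _ => hDnn i (hxh i k) hxs
  have hVdec : ∀ mm, V mm - V (mm+1) =
      Dg (u1 (mm+1)) (xh (u1 (mm+1)) (mm+1)) (xh (u1 (mm+1)) mm) +
      Dg (u2 (mm+1)) (xh (u2 (mm+1)) (mm+1)) (xh (u2 (mm+1)) mm) := by
    intro mm
    have hab : u1 (mm+1) ≠ u2 (mm+1) := hu _ (hone mm)
    have hc := hcons _ (hone mm)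
    simp only [Nat.add_sub_cancel] at hc
    have he := heq _ (hone mm)
    have hkey : V mm - V (mm+1) = ∑ i, (Dg i xs (xh i mm) - Dg i xs (xh i (mm+1))) := by
      rw [hV_def, ← Finset.sum_sub_distrib]
    rw [hkey]
    rw [← Finset.sum_subset (Finset.subset_univ ({u1 (mm+1), u2 (mm+1)} : Finset ι))
      (fun i _ hi => by
        simp only [Finset.mem_insert, Finset.mem_singleton] at hi
        push_neg at hi
        have hid : xh i (mm+1) = xh i mm := by
          have := hidle _ (hone mm) i hi.1 hi.2
          simpa using this
        rw [hid]
        ring)]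
    rw [Finset.sum_pair hab]
    simp only [hDg_def]
    rw [← he] at hc ⊢
    linear_combination (xs - xh (u1 (mm+1)) (mm+1)) * hc
  have hVanti : Antitone V := by
    apply antitone_nat_of_succ_le
    intro mm
    have := hVdec mm
    have h1 := hDnn (u1 (mm+1)) (t := xh (u1 (mm+1)) mm) (s := xh (u1 (mm+1)) (mm+1))
      (hxh _ _) (hxh _ _)
    have h2 := hDnn (u2 (mm+1)) (t := xh (u2 (mm+1)) mm) (s := xh (u2 (mm+1)) (mm+1))
      (hxh _ _) (hxh _ _)
    linarith
  -- gradient sum is identically zero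
  have hg0 : ∀ i, f' i (xm i) = 0 := by
    intro i
    have hloc : IsLocalMin (f i) (xm i) :=
      Filter.eventually_of_mem (hXopen.mem_nhds (hxm i)) (fun x hx => hmin i x hx)
    exact hloc.hasDerivAt_eq_zero (hderiv i _ (hxm i))
  have hsum0 : ∀ k, ∑ i, f' i (xh i k) = 0 := by
    intro k
    induction k with
    | zero =>
      simp only [hinit]
      exact Finset.sum_eq_zero fun i _ => hg0 i
    | succ mm ih =>
      rw [← ih]
      refine sum_pair_ext (hu _ (hone mm)) _ _ (fun i hia hib => ?_) ?_
      · exact congrArg (f' i) (by simpa using hidle _ (hone mm) i hia hib)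
      · have := hcons _ (hone mm)
        simpa using this
  -- uniform positive lower bound for the Bregman gap on the compact box
  have hdelta : ∀ ε : ℝ, 0 < ε → ∃ δ : ℝ, 0 < δ ∧ ∀ i, ∀ s ∈ Set.Icc (mlo 0) (Mhi 0),
      ∀ t ∈ Set.Icc (mlo 0) (Mhi 0), ε ≤ |s - t| → δ ≤ Dg i s t := by
    intro ε hε
    set J := Set.Icc (mlo 0) (Mhi 0) with hJ_def
    set C : Set (ℝ × ℝ) := (J ×ˢ J) ∩ {p : ℝ × ℝ | ε ≤ |p.1 - p.2|} with hC_def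
    have hCcomp : IsCompact C :=
      (isCompact_Icc.prod isCompact_Icc).inter_right
        (isClosed_le continuous_const (continuous_fst.sub continuous_snd).abs)
    by_cases hCne : C.Nonempty
    · have hcontD : ∀ i, ContinuousOn (fun p : ℝ × ℝ => Dg i p.1 p.2) C := by
        intro i
        have h1 : ContinuousOn (fun p : ℝ × ℝ => f i p.1) C :=
          (hcf i).comp continuous_fst.continuousOn (fun p hp => hJX hp.1.1)
        have h2 : ContinuousOn (fun p : ℝ × ℝ => f i p.2) C :=
          (hcf i).comp continuous_snd.continuousOn (fun p hp => hJX hp.1.2)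
        have h3 : ContinuousOn (fun p : ℝ × ℝ => f' i p.2) C :=
          (hcont i).comp continuous_snd.continuousOn (fun p hp => hJX hp.1.2)
        exact (h1.sub h2).sub (h3.mul (continuous_fst.sub continuous_snd).continuousOn)
      have hmin' : ∀ i : ι, ∃ p ∈ C, ∀ q ∈ C, Dg i p.1 p.2 ≤ Dg i q.1 q.2 := by
        intro i
        obtain ⟨p, hpC, hpmin⟩ := hCcomp.exists_isMinOn hCne (hcontD i)
        exact ⟨p, hpC, fun q hq => hpmin hq⟩
      choose pt hptC hptmin using hmin'
      set δ : ℝ := Finset.univ.inf' hne' (fun i => Dg i (pt i).1 (pt i).2) with hδ_def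
      refine ⟨δ, ?_, ?_⟩
      · rw [hδ_def, Finset.lt_inf'_iff]
        intro i _
        have hne2 : (pt i).2 ≠ (pt i).1 := by
          have := (hptC i).2
          simp only [Set.mem_setOf_eq] at this
          intro h
          rw [h] at this
          simp at this
          linarith
        exact hDpos i (hJX (hptC i).1.2) (hJX (hptC i).1.1) hne2
      · intro i s hs t ht hst
        have hqC : (s, t) ∈ C := ⟨Set.mk_mem_prod hs ht, hst⟩
        calc δ ≤ Dg i (pt i).1 (pt i).2 := Finset.inf'_le _ (Finset.mem_univ i)
        _ ≤ Dg i s t := hptmin i (s, t) hqC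
    · refine ⟨1, one_pos, fun i s hs t ht hst => ?_⟩
      exact absurd (⟨(s, t), Set.mk_mem_prod hs ht, hst⟩ : C.Nonempty) hCne
  -- eventually all steps are small
  have hsmall : ∀ ε : ℝ, 0 < ε → ∃ K : ℕ, ∀ k, K ≤ k →
      |xh (u1 (k+1)) (k+1) - xh (u1 (k+1)) k| < ε ∧
      |xh (u2 (k+1)) (k+1) - xh (u2 (k+1)) k| < ε := by
    intro ε hε
    obtain ⟨δ, hδ0, hδ⟩ := hdelta ε hε
    by_contra h
    push_neg at h
    have hbad : ∀ K : ℕ, ∃ k, K ≤ k ∧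
        (ε ≤ |xh (u1 (k+1)) (k+1) - xh (u1 (k+1)) k| ∨
         ε ≤ |xh (u2 (k+1)) (k+1) - xh (u2 (k+1)) k|) := by
      intro K
      obtain ⟨k, hk1, hk2⟩ := h K
      refine ⟨k, hk1, ?_⟩
      by_contra hc
      push_neg at hc
      have := hk2 hc.1
      linarith [hc.2]
    have hiter : ∀ t : ℕ, ∃ k, V k ≤ V 0 - t * δ := by
      intro t
      induction t with
      | zero => exact ⟨0, by simp⟩
      | succ t ih =>
        obtain ⟨k, hk⟩ := ih
        obtain ⟨k', hkk', hbig⟩ := hbad k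
        have hV1 : V k' ≤ V k := hVanti hkk'
        have hd := hVdec k'
        have hd1 := hDnn (u1 (k'+1)) (t := xh (u1 (k'+1)) k') (s := xh (u1 (k'+1)) (k'+1))
          (hxh _ _) (hxh _ _)
        have hd2 := hDnn (u2 (k'+1)) (t := xh (u2 (k'+1)) k') (s := xh (u2 (k'+1)) (k'+1))
          (hxh _ _) (hxh _ _)
        have hbig' : δ ≤ V k' - V (k'+1) := by
          rcases hbig with hb | hb
          · have := hδ (u1 (k'+1)) _ (hxhJ _ _) _ (hxhJ _ _) hb
            linarith
          · have := hδ (u2 (k'+1)) _ (hxhJ _ _) _ (hxhJ _ _) hb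
            linarith
        refine ⟨k'+1, ?_⟩
        push_cast
        push_cast at hk
        linarith
    obtain ⟨t, ht⟩ := exists_nat_gt (V 0 / δ)
    obtain ⟨k, hk⟩ := hiter t
    rw [div_lt_iff₀ hδ0] at ht
    have := hVnn k
    linarith
  -- limits of the min and max processes
  have hMbdd : BddBelow (Set.range Mhi) := by
    refine ⟨mlo 0, ?_⟩
    rintro _ ⟨k, rfl⟩
    exact le_trans (hmmono (Nat.zero_le k)) (hmM k)
  have hmbdd : BddAbove (Set.range mlo) := by
    refine ⟨Mhi 0, ?_⟩
    rintro _ ⟨k, rfl⟩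
    exact le_trans (hmM k) (hManti (Nat.zero_le k))
  have hMlim : Tendsto Mhi atTop (nhds (⨅ k, Mhi k)) := tendsto_atTop_ciInf hManti hMbdd
  have hmlim : Tendsto mlo atTop (nhds (⨆ k, mlo k)) := tendsto_atTop_ciSup hmmono hmbdd
  set Minf := ⨅ k, Mhi k with hMinf_def
  set minf := ⨆ k, mlo k with hminf_def
  have hMk : ∀ k, Minf ≤ Mhi k := fun k => ciInf_le hMbdd k
  have hmk : ∀ k, mlo k ≤ minf := fun k => le_ciSup hmbdd k
  have hmMinf : minf ≤ Minf := le_of_tendsto_of_tendsto' hmlim hMlim hmM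
  have hmlo_minf : ∀ k, minf ≤ Mhi k := fun k => le_trans hmMinf (hMk k)
  -- the min and max limits coincide
  have hcons_lim : Minf = minf := by
    by_contra hne0
    have hDif : 0 < Minf - minf :=
      sub_pos.mpr (lt_of_le_of_ne hmMinf (fun h => hne0 h.symm))
    set n := Fintype.card ι with hn_def
    have hn2 : 2 ≤ n := hcard
    have hn0 : (0:ℝ) < (n:ℝ) := by
      have : 0 < n := by omega
      exact_mod_cast this
    set ε := (Minf - minf) / (8 * n) with hε_def
    have hεpos : 0 < ε := div_pos hDif (by positivity)
    have hIdent : Minf - minf = 8 * n * ε := by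
      rw [hε_def]
      field_simp
    obtain ⟨K, hK⟩ := hsmall ε hεpos
    set MK := Mhi K with hMK_def
    have hmKlow : mlo K ≤ MK - 8 * n * ε := by
      have h1 : mlo K ≤ minf := hmk K
      have h2 : Minf ≤ MK := hMk K
      linarith
    -- pigeonhole: there is an empty band below the maximum
    have hgap : ∃ j : ℕ, 1 ≤ j ∧ j < n ∧
        ∀ i, xh i K ∉ Set.Ioc (MK - 4*ε*(j+1)) (MK - 4*ε*j) := by
      by_contra hg
      push_neg at hg
      have hg' : ∀ j ∈ Finset.Ico 1 n, ∃ i,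
          xh i K ∈ Set.Ioc (MK - 4*ε*(j+1)) (MK - 4*ε*j) := by
        intro j hj
        rw [Finset.mem_Ico] at hj
        exact hg j hj.1 hj.2
      choose! w hw using hg'
      have hkey : ∀ j1 ∈ Finset.Ico 1 n, ∀ j2 ∈ Finset.Ico 1 n, j1 < j2 → w j1 ≠ w j2 := by
        intro j1 hj1 j2 hj2 hlt hww
        have h1 := (hw j1 hj1).1
        have h2 := (hw j2 hj2).2
        rw [hww] at h1
        have hc : (j1:ℝ) + 1 ≤ (j2:ℝ) := by exact_mod_cast hlt
        nlinarith
      have hinj : Set.InjOn w (Finset.Ico 1 n) := by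
        intro j1 hj1 j2 hj2 hww
        by_contra hne3
        rcases Nat.lt_or_ge j1 j2 with hlt | hge
        · exact hkey j1 hj1 j2 hj2 hlt hww
        · have hlt2 : j2 < j1 := by omega
          exact hkey j2 hj2 j1 hj1 hlt2 hww.symm
      set s := (Finset.Ico 1 n).image w with hs_def
      have hscard : s.card = n - 1 := by
        rw [hs_def, Finset.card_image_of_injOn hinj, Nat.card_Ico]
      obtain ⟨iM, -, hiM⟩ := Finset.exists_mem_eq_sup' hne' (fun i => xh i K)
      obtain ⟨i0, -, hi0⟩ := Finset.exists_mem_eq_inf' hne' (fun i => xh i K)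
      have hiMv : MK = xh iM K := hiM
      have hi0v : mlo K = xh i0 K := hi0
      have hiMs : iM ∉ s := by
        intro hmem
        rw [hs_def, Finset.mem_image] at hmem
        obtain ⟨j, hj, hwj⟩ := hmem
        have h2 := (hw j hj).2
        rw [hwj, ← hiMv] at h2
        rw [Finset.mem_Ico] at hj
        have hj1 : (1:ℝ) ≤ (j:ℝ) := by exact_mod_cast hj.1
        nlinarith
      have hi0s : i0 ∉ insert iM s := by
        simp only [Finset.mem_insert]
        push_neg
        constructor
        · intro h0
          rw [h0, ← hiMv] at hi0v
          rw [hi0v] at hmKlow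
          nlinarith
        · intro hmem
          rw [hs_def, Finset.mem_image] at hmem
          obtain ⟨j, hj, hwj⟩ := hmem
          have h1 := (hw j hj).1
          rw [hwj, ← hi0v] at h1
          rw [Finset.mem_Ico] at hj
          have hjn : (j:ℝ) + 1 ≤ (n:ℝ) := by exact_mod_cast hj.2
          nlinarith
      have hcard2 : n + 1 ≤ n := by
        have h1 : (insert i0 (insert iM s)).card = n + 1 := by
          rw [Finset.card_insert_of_notMem hi0s, Finset.card_insert_of_notMem hiMs, hscard]
          omega
        calc n + 1 = (insert i0 (insert iM s)).card := h1.symm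
        _ ≤ Fintype.card ι := Finset.card_le_univ _
        _ = n := rfl
      omega
    obtain ⟨j, hj1, hjn, hjempty⟩ := hgap
    set θ := MK - 4*ε*j with hθ_def
    set T : Finset ι := Finset.univ.filter (fun i => θ ≤ xh i K) with hT_def
    have hTmem : ∀ i, i ∈ T ↔ θ ≤ xh i K := by
      intro i
      rw [hT_def]
      simp
    -- gossiping pairs are 2ε-close after time K
    have hgap2 : ∀ k, K ≤ k → |xh (u1 (k+1)) k - xh (u2 (k+1)) k| < 2*ε := by
      intro k hk
      obtain ⟨h1, h2⟩ := hK k hk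
      have he := heq _ (hone k)
      have b1 := abs_lt.mp h1
      have b2 := abs_lt.mp h2
      rw [he] at b1
      rw [abs_lt]
      exact ⟨by linarith [b1.1, b1.2, b2.1, b2.2], by linarith [b1.1, b1.2, b2.1, b2.2]⟩
    -- the threshold invariant for all times ≥ K
    have hinv : ∀ k, K ≤ k → ∀ i, (i ∈ T → θ ≤ xh i k) ∧ (i ∉ T → xh i k ≤ θ - 4*ε) := by
      intro k hk
      induction k, hk using Nat.le_induction with
      | base =>
        intro i
        refine ⟨(hTmem i).1, fun hiT => ?_⟩
        have hlt : xh i K < θ := lt_of_not_ge (fun h => hiT ((hTmem i).2 h))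
        have hnot := hjempty i
        rw [Set.mem_Ioc] at hnot
        push_neg at hnot
        by_contra hgt
        push_neg at hgt
        have hlb : MK - 4*ε*((j:ℝ)+1) = θ - 4*ε := by rw [hθ_def]; ring
        have := hnot (by rw [hlb]; exact hgt)
        rw [hθ_def] at hlt
        linarith
      | succ k hk ih =>
        intro i
        have hbig := abs_lt.mp (hgap2 k hk)
        have habT : (u1 (k+1) ∈ T ∧ u2 (k+1) ∈ T) ∨ (u1 (k+1) ∉ T ∧ u2 (k+1) ∉ T) := by
          by_cases ha : u1 (k+1) ∈ T <;> by_cases hb : u2 (k+1) ∈ T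
          · exact Or.inl ⟨ha, hb⟩
          · exfalso
            have h1 := (ih (u1 (k+1))).1 ha
            have h2 := (ih (u2 (k+1))).2 hb
            linarith [hbig.1, hbig.2]
          · exfalso
            have h1 := (ih (u2 (k+1))).1 hb
            have h2 := (ih (u1 (k+1))).2 ha
            linarith [hbig.1, hbig.2]
          · exact Or.inr ⟨ha, hb⟩
        have hlow : ∀ hT1 : u1 (k+1) ∈ T, ∀ hT2 : u2 (k+1) ∈ T, θ ≤ xh (u1 (k+1)) (k+1) := by
          intro hT1 hT2
          have h1 := (ih (u1 (k+1))).1 hT1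
          have h2 := (ih (u2 (k+1))).1 hT2
          have h3 := (hbtw k).1
          have h4 : θ ≤ min (xh (u1 (k+1)) k) (xh (u2 (k+1)) k) := le_min h1 h2
          exact le_trans h4 h3
        have hhigh : ∀ hT1 : u1 (k+1) ∉ T, ∀ hT2 : u2 (k+1) ∉ T,
            xh (u1 (k+1)) (k+1) ≤ θ - 4*ε := by
          intro hT1 hT2
          have h1 := (ih (u1 (k+1))).2 hT1
          have h2 := (ih (u2 (k+1))).2 hT2
          have h3 := (hbtw k).2
          have h4 : max (xh (u1 (k+1)) k) (xh (u2 (k+1)) k) ≤ θ - 4*ε := max_le h1 h2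
          exact le_trans h3 h4
        constructor
        · intro hiT
          by_cases hia : i = u1 (k+1)
          · subst hia
            rcases habT with ⟨ha, hb⟩ | ⟨ha, hb⟩
            · exact hlow ha hb
            · exact absurd hiT ha
          by_cases hib : i = u2 (k+1)
          · subst hib
            rw [← heq _ (hone k)]
            rcases habT with ⟨ha, hb⟩ | ⟨ha, hb⟩
            · exact hlow ha hb
            · exact absurd hiT hb
          · have hid : xh i (k+1) = xh i k := by simpa using hidle _ (hone k) i hia hib
            rw [hid]
            exact (ih i).1 hiT
        · intro hiT
          by_cases hia : i = u1 (k+1)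
          · subst hia
            rcases habT with ⟨ha, hb⟩ | ⟨ha, hb⟩
            · exact absurd ha hiT
            · exact hhigh ha hb
          by_cases hib : i = u2 (k+1)
          · subst hib
            rw [← heq _ (hone k)]
            rcases habT with ⟨ha, hb⟩ | ⟨ha, hb⟩
            · exact absurd hb hiT
            · exact hhigh ha hb
          · have hid : xh i (k+1) = xh i k := by simpa using hidle _ (hone k) i hia hib
            rw [hid]
            exact (ih i).2 hiT
    -- a persistent edge across the threshold gives a contradiction
    obtain ⟨iM, -, hiM⟩ := Finset.exists_mem_eq_sup' hne' (fun i => xh i K)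
    obtain ⟨i0, -, hi0⟩ := Finset.exists_mem_eq_inf' hne' (fun i => xh i K)
    have hiMv : MK = xh iM K := hiM
    have hi0v : mlo K = xh i0 K := hi0
    have hiMT : iM ∈ T := by
      rw [hTmem, ← hiMv, hθ_def]
      have hj0 : (0:ℝ) ≤ 4*ε*(j:ℝ) := by positivity
      linarith
    have hi0T : i0 ∉ T := by
      rw [hTmem, ← hi0v]
      intro hle
      have hjn' : (j:ℝ) + 1 ≤ (n:ℝ) := by exact_mod_cast hjn
      rw [hθ_def] at hle
      have hb : 4*ε*(j:ℝ) ≤ 4*ε*((n:ℝ)-1) :=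
        mul_le_mul_of_nonneg_left (by linarith) (by linarith)
      have hprod : 0 < ε * (n:ℝ) := mul_pos hεpos hn0
      linarith
    obtain ⟨wk⟩ := hconn.preconnected iM i0
    obtain ⟨d, -, hdS, hdS'⟩ := wk.exists_boundary_dart (↑T : Set ι)
      (Finset.mem_coe.mpr hiMT) (fun h => hi0T (Finset.mem_coe.mp h))
    obtain ⟨hdne, hdinf⟩ := (hG d.fst d.snd).mp d.adj
    have hfire : ∃ k, (1 ≤ k ∧ ({u1 k, u2 k} : Set ι) = {d.fst, d.snd}) ∧ K + 1 ≤ k := by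
      by_contra hcn
      push_neg at hcn
      apply hdinf
      apply Set.Finite.subset (Set.finite_Iio (K+1))
      intro k hkmem
      exact hcn k hkmem
    obtain ⟨k, ⟨hk1, hkpair⟩, hkK⟩ := hfire
    obtain ⟨k0, rfl⟩ : ∃ k0, k = k0 + 1 := ⟨k - 1, by omega⟩
    have hk0K : K ≤ k0 := by omega
    have hgapk := abs_lt.mp (hgap2 k0 hk0K)
    have hinvk := hinv k0 hk0K
    rcases Set.pair_eq_pair_iff.mp hkpair with ⟨ha, hb⟩ | ⟨ha, hb⟩
    · have h1 := (hinvk (u1 (k0+1))).1 (by rw [ha]; exact Finset.mem_coe.mp hdS)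
      have h2 := (hinvk (u2 (k0+1))).2 (by rw [hb]; exact fun hmem => hdS' (Finset.mem_coe.mpr hmem))
      linarith [hgapk.1, hgapk.2]
    · have h1 := (hinvk (u2 (k0+1))).1 (by rw [hb]; exact Finset.mem_coe.mp hdS)
      have h2 := (hinvk (u1 (k0+1))).2 (by rw [ha]; exact fun hmem => hdS' (Finset.mem_coe.mpr hmem))
      linarith [hgapk.1, hgapk.2]
  -- all estimates converge to the common limit, which must be xs
  have hsq : ∀ i, Tendsto (fun k => xh i k) atTop (nhds Minf) := by
    intro i
    have hmlim' : Tendsto mlo atTop (nhds Minf) := by rw [hcons_lim]; exact hmlim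
    exact tendsto_of_tendsto_of_tendsto_of_le_of_le hmlim' hMlim
      (fun k => hmlo_le k i) (fun k => hle_Mhi k i)
  have hLJ : Minf ∈ Set.Icc (mlo 0) (Mhi 0) := by
    constructor
    · rw [hcons_lim]; exact hmk 0
    · exact hMk 0
  have hLX : Minf ∈ X := hJX hLJ
  have hsumlim : Tendsto (fun k => ∑ i, f' i (xh i k)) atTop (nhds (∑ i, f' i Minf)) := by
    apply tendsto_finset_sum
    intro i _
    exact (((hcont i).continuousAt (hXopen.mem_nhds hLX)).tendsto).comp (hsq i)
  have hzero : ∑ i, f' i Minf = 0 := by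
    have hconst : (fun k => ∑ i, f' i (xh i k)) = fun _ => (0:ℝ) := funext hsum0
    rw [hconst] at hsumlim
    exact tendsto_nhds_unique hsumlim tendsto_const_nhds
  have hMinf_eq : Minf = xs := by
    rcases lt_trichotomy Minf xs with h | h | h
    · exfalso
      have hlt : ∑ i, f' i Minf < ∑ i, f' i xs :=
        Finset.sum_lt_sum_of_nonempty hne' (fun i _ => hmono i hLX hxs h)
      rw [hzero, hxs0] at hlt
      exact lt_irrefl 0 hlt
    · exact h
    · exfalso
      have hlt : ∑ i, f' i xs < ∑ i, f' i Minf :=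
        Finset.sum_lt_sum_of_nonempty hne' (fun i _ => hmono i hxs hLX h)
      rw [hzero, hxs0] at hlt
      exact lt_irrefl 0 hlt
  intro i
  rw [← hMinf_eq]
  exact hsq i
end

section
/- Consider one step of the Pairwise Bisectioning update for a pair {i, j} of distinct nodes, with 𝒳 ⊆ ℝ a nonempty open interval, f_i, f_j : 𝒳 → ℝ strictly convex and continuously differentiable, previous values p_i ≤ p_j in 𝒳, and x* ∈ 𝒳 the unique zero of ∑_{ℓ∈V} f_ℓ' (all other coordinates fixed). Suppose (a_i, a_j) ∈ 𝒳² and (b_i, b_j) ∈ 𝒳² both satisfy the conservation condition f_i'(a_i) + f_j'(a_j) = f_i'(p_i) + f_j'(p_j) (and likewise for (b_i, b_j)) and the approaching condition p_i ≤ a_i ≤ a_j ≤ p_j and p_i ≤ b_i ≤ b_j ≤ p_j. If a_j − a_i < b_j − b_i, then the Lyapunov value after the update is strictly smaller for (a_i, a_j) than for (b_i, b_j): [f_i(x*) − f_i(a_i) − f_i'(a_i)(x* − a_i)] + [f_j(x*) − f_j(a_j) − f_j'(a_j)(x* − a_j)] < [f_i(x*) − f_i(b_i) − f_i'(b_i)(x*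 − b_i)] + [f_j(x*) − f_j(b_j) − f_j'(b_j)(x* − b_j)]. -/
private lemma aux_mono {X : Set ℝ} {g g' : ℝ → ℝ} (hconv : StrictConvexOn ℝ X g)
    (hderiv : ∀ x ∈ X, HasDerivAt g (g' x) x) {x y : ℝ}
    (hx : x ∈ X) (hy : y ∈ X) (hxy : x < y) : g' x < g' y :=
  (hconv.lt_slope_of_hasDerivAt hx hy hxy (hderiv x hx)).trans
    (hconv.slope_lt_of_hasDerivAt hx hy hxy (hderiv y hy))

/-- Bregman positivity: `g a - g b - g' b * (a - b) > 0` for `a ≠ b`. -/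
private lemma aux_breg {X : Set ℝ} {g g' : ℝ → ℝ} (hconv : StrictConvexOn ℝ X g)
    (hderiv : ∀ x ∈ X, HasDerivAt g (g' x) x) {a b : ℝ}
    (ha : a ∈ X) (hb : b ∈ X) (hab : a ≠ b) :
    0 < g a - g b - g' b * (a - b) := by
  rcases lt_or_gt_of_ne hab with h | h
  · have := hconv.slope_lt_of_hasDerivAt ha hb h (hderiv b hb)
    rw [slope_def_field, div_lt_iff₀ (by linarith)] at this
    nlinarith
  · have := hconv.lt_slope_of_hasDerivAt hb ha h (hderiv b hb)
    rw [slope_def_field, lt_div_iff₀ (by linarith)] at this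
    nlinarith

/-- One step of Pairwise Bisectioning for the pair `{i, j}`:
among updates satisfying conservation and the approaching condition from
previous values `p i ≤ p j`, a strictly smaller remaining gap yields a
strictly smaller post-update Lyapunov value. -/
theorem stmt_12 (X : Set ℝ) (hXopen : IsOpen X) (hXne : X.Nonempty)
    (hXconn : X.OrdConnected)
    (ι : Type*) [Fintype ι] [Nonempty ι]
    (f f' : ι → ℝ → ℝ)
    (hconv : ∀ l, StrictConvexOn ℝ X (f l))
    (hderiv : ∀ l, ∀ x ∈ X, HasDerivAt (f l) (f' l x) x)
    (hcont : ∀ l, ContinuousOn (f' l) X)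
    (xs : ℝ) (hxs : xs ∈ X) (hxs0 : ∑ l, f' l xs = 0)
    (i j : ι) (hij : i ≠ j)
    (pi pj : ℝ) (hpi : pi ∈ X) (hpj : pj ∈ X) (hpij : pi ≤ pj)
    (ai aj bi bj : ℝ) (hai : ai ∈ X) (haj : aj ∈ X) (hbi : bi ∈ X) (hbj : bj ∈ X)
    (hconsa : f' i ai + f' j aj = f' i pi + f' j pj)
    (hconsb : f' i bi + f' j bj = f' i pi + f' j pj)
    (happra : pi ≤ ai ∧ ai ≤ aj ∧ aj ≤ pj)
    (happrb : pi ≤ bi ∧ bi ≤ bj ∧ bj ≤ pj)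
    (hgap : aj - ai < bj - bi) :
    (f i xs - f i ai - f' i ai * (xs - ai)) +
      (f j xs - f j aj - f' j aj * (xs - aj)) <
    (f i xs - f i bi - f' i bi * (xs - bi)) +
      (f j xs - f j bj - f' j bj * (xs - bj)) := by
  obtain ⟨-, haij, -⟩ := happra
  -- Step 1: bi < ai
  have hmono : ∀ (l : ι) {x y : ℝ}, x ∈ X → y ∈ X → x < y → f' l x < f' l y :=
    fun l _ _ hx hy hxy => aux_mono (hconv l) (hderiv l) hx hy hxy
  have hbiai : bi < ai := by
    rcases lt_trichotomy bi ai with h | h | h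
    · exact h
    · exfalso
      have h1 : f' j aj = f' j bj := by rw [← h] at hconsa; linarith
      rcases lt_trichotomy aj bj with h2 | h2 | h2
      · exact absurd h1 (ne_of_lt (hmono j haj hbj h2))
      · rw [h, h2] at hgap; exact lt_irrefl _ hgap
      · exact absurd h1.symm (ne_of_lt (hmono j hbj haj h2))
    · exfalso
      have h1 : f' i ai < f' i bi := hmono i hai hbi h
      have h2 : f' j bj < f' j aj := by linarith
      have h3 : bj < aj := by
        by_contra hc
        push_neg at hc
        rcases eq_or_lt_of_le hc with hc | hc
        · rw [hc] at h2; exact lt_irrefl _ h2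
        · exact absurd (hmono j haj hbj hc) (not_lt_of_gt h2)
      linarith
  have ht : 0 < f' i ai - f' i bi := by
    have := hmono i hbi hai hbiai; linarith
  have hajbj : aj < bj := by
    have h2 : f' j aj < f' j bj := by linarith
    by_contra hc
    push_neg at hc
    rcases eq_or_lt_of_le hc with hc | hc
    · rw [hc] at h2; exact lt_irrefl _ h2
    · exact absurd (hmono j hbj haj hc) (not_lt_of_gt h2)
  have hB1 : 0 < f i ai - f i bi - f' i bi * (ai - bi) :=
    aux_breg (hconv i) (hderiv i) hai hbi (ne_of_gt hbiai)
  have hB2 : 0 < f j aj - f j bj - f' j bj * (aj - bj) :=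
    aux_breg (hconv j) (hderiv j) haj hbj (ne_of_lt hajbj)
  have hcons : f' i ai - f' i bi = f' j bj - f' j aj := by linarith
  have hj : f' j aj = f' j bj - (f' i ai - f' i bi) := by linarith
  have key : (f i xs - f i bi - f' i bi * (xs - bi)) +
      (f j xs - f j bj - f' j bj * (xs - bj)) -
      ((f i xs - f i ai - f' i ai * (xs - ai)) +
      (f j xs - f j aj - f' j aj * (xs - aj))) =
      (f i ai - f i bi - f' i bi * (ai - bi)) +
      (f j aj - f j bj - f' j bj * (aj - bj)) +
      (f' i ai - f' i bi) * (aj - ai) := by rw [hj]; ring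
  nlinarith [mul_nonneg ht.le (sub_nonneg.mpr haij)]
end
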